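/- arXiv:0806.0498 — 2 statements merged into one kernel-verified Lean document; each statement's English description precedes it below -/
import Mathlib

section
/- Let μ₀ > 0, M > 0, C > 0, and suppose η : (-∞, 0] → [0, 2C] is a continuous function satisfying μ₀ + ∫_φ^0 η(t)²/C dt ≤ M·η(φ) for all φ ≤ 0. Then a contradiction ensues; i.e., no such function η exists. Equivalently: if η is continuous, nonnegative, and satisfies the integral inequality, then η is unbounded on (-∞,0], contradicting η ≤ 2C. -/
open Real

/-- ODE-comparison step of the Collin–Krust flux-growth argument: there is no
continuous function η : (-∞,0] → [0,2C] satisfying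
μ₀ + ∫_φ^0 η(t)²/C dt ≤ M·η(φ) for all φ ≤ 0 (with μ₀, M, C > 0). -/
theorem no_bounded_flux_function (μ₀ M C : ℝ) (hμ₀ : 0 < μ₀) (hM : 0 < M) (hC : 0 < C)
    (η : ℝ → ℝ) (hcont : Continuous η)
    (hbound : ∀ φ : ℝ, φ ≤ 0 → 0 ≤ η φ ∧ η φ ≤ 2 * C)
    (hineq : ∀ φ : ℝ, φ ≤ 0 → μ₀ + ∫ t in φ..(0 : ℝ), (η t) ^ 2 / C ≤ M * η φ) :
    False := by
  -- Step 1: η t ≥ μ₀ / M for every t ≤ 0.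
  have hlow : ∀ t : ℝ, t ≤ 0 → μ₀ / M ≤ η t := by
    intro t ht
    have hint : (0 : ℝ) ≤ ∫ s in t..(0 : ℝ), (η s) ^ 2 / C :=
      intervalIntegral.integral_nonneg ht (fun x _ => by positivity)
    have := hineq t ht
    have : μ₀ ≤ M * η t := by linarith
    rw [div_le_iff₀' hM]
    linarith
  -- constant lower bound for the integrand
  set K : ℝ := (μ₀ / M) ^ 2 / C with hK
  have hKpos : 0 < K := by positivity
  -- choose φ far enough to the left
  set φ : ℝ := -(2 * M * C / K) with hφ
  have hφneg : φ ≤ 0 := by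
    have : 0 < 2 * M * C / K := by positivity
    simp [hφ]; linarith
  -- integrability
  have hintg : IntervalIntegrable (fun t => (η t) ^ 2 / C) MeasureTheory.volume φ 0 :=
    ((hcont.pow 2).div_const C).intervalIntegrable _ _
  have hintK : IntervalIntegrable (fun _ : ℝ => K) MeasureTheory.volume φ 0 :=
    intervalIntegrable_const
  -- lower bound the integral
  have hmono : ∫ t in φ..(0 : ℝ), K ≤ ∫ t in φ..(0 : ℝ), (η t) ^ 2 / C := by
    apply intervalIntegral.integral_mono_on hφneg hintK hintg
    intro x hx
    have hx0 : x ≤ 0 := hx.2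
    have h1 : μ₀ / M ≤ η x := hlow x hx0
    have h2 : (μ₀ / M) ^ 2 ≤ (η x) ^ 2 := by
      apply pow_le_pow_left₀ (by positivity) h1
    rw [hK]
    gcongr
  have hconst : ∫ t in φ..(0 : ℝ), K = (0 - φ) * K := by
    rw [intervalIntegral.integral_const, smul_eq_mul]
  have hval : (0 - φ) * K = 2 * M * C := by
    rw [hφ, zero_sub, neg_neg, div_mul_cancel₀ _ hKpos.ne']
  have h2C : η φ ≤ 2 * C := (hbound φ hφneg).2
  have := hineq φ hφneg
  have hMη : M * η φ ≤ M * (2 * C) := by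
    exact mul_le_mul_of_nonneg_left h2C hM.le
  nlinarith [hmono, hconst, hval]
end

section
/- For x ≥ 2 and y > 0, define h₁(x,y) = ln(sqrt(1+(y/(x+1))²) + y/(x+1)) and h₂(x,y) = ln(sqrt(1+(y/(x-1))²) + y/(x-1)). Then h₁(x,y) - h₂(x,y) ≥ -ln 3. -/
/-- For x ≥ 2 and y > 0, with h₁(x,y) = ln(√(1+(y/(x+1))²) + y/(x+1)) and
h₂(x,y) = ln(√(1+(y/(x-1))²) + y/(x-1)), one has h₁ - h₂ ≥ -ln 3. -/
theorem scherk_barrier_difference_bound (x y : ℝ) (hx : 2 ≤ x) (hy : 0 < y) :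
    Real.log (Real.sqrt (1 + (y / (x + 1)) ^ 2) + y / (x + 1))
      - Real.log (Real.sqrt (1 + (y / (x - 1)) ^ 2) + y / (x - 1))
      ≥ -Real.log 3 := by
  set a := y / (x + 1) with ha_def
  set b := y / (x - 1) with hb_def
  have hx1 : (0:ℝ) < x + 1 := by linarith
  have hx2 : (0:ℝ) < x - 1 := by linarith
  have ha : 0 < a := div_pos hy hx1
  have hb : 0 < b := div_pos hy hx2
  have hba : b ≤ 3 * a := by
    rw [ha_def, hb_def, div_le_iff₀ hx2]
    have : 3 * (y / (x + 1)) * (x - 1) = 3 * y * (x - 1) / (x + 1) := by ring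
    rw [this, le_div_iff₀ hx1]
    nlinarith
  have hsq : Real.sqrt (1 + b ^ 2) ≤ 3 * Real.sqrt (1 + a ^ 2) := by
    have h1 : Real.sqrt (1 + b ^ 2) ≤ Real.sqrt (9 * (1 + a ^ 2)) := by
      apply Real.sqrt_le_sqrt
      nlinarith
    have h2 : Real.sqrt (9 * (1 + a ^ 2)) = 3 * Real.sqrt (1 + a ^ 2) := by
      rw [show (9:ℝ) = 3 ^ 2 by norm_num, Real.sqrt_mul (by positivity),
        Real.sqrt_sq (by norm_num : (0:ℝ) ≤ 3)]
    linarith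
  have hXpos : 0 < Real.sqrt (1 + a ^ 2) + a := by positivity
  have hY : Real.sqrt (1 + b ^ 2) + b ≤ 3 * (Real.sqrt (1 + a ^ 2) + a) := by linarith
  have hlog : Real.log (Real.sqrt (1 + b ^ 2) + b)
      ≤ Real.log 3 + Real.log (Real.sqrt (1 + a ^ 2) + a) := by
    calc Real.log (Real.sqrt (1 + b ^ 2) + b)
        ≤ Real.log (3 * (Real.sqrt (1 + a ^ 2) + a)) :=
          Real.log_le_log (by positivity) hY
      _ = Real.log 3 + Real.log (Real.sqrt (1 + a ^ 2) + a) :=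
          Real.log_mul (by norm_num) (ne_of_gt hXpos)
  linarith
end
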